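/- Let L be a fuzzy lax extension of a Set-functor T and let σ : (−)^n ⇒ T be a natural transformation. Then the Moss lifting μ^σ preserves nonexpansivity: for every fuzzy relation R : A ×> B and all R-nonexpansive pairs (f₁,g₁),…,(fₙ,gₙ), the pair (μ^σ_A(f₁,…,fₙ), μ^σ_B(g₁,…,gₙ)) is LR-nonexpansive, i.e. μ^σ_A(f₁,…,fₙ)(t₁) − μ^σ_B(g₁,…,gₙ)(t₂) ≤ LR(t₁,t₂) for all t₁ ∈ TA, t₂ ∈ TB. -/
import Mathlib


open unitInterval

noncomputable section

instance : Fact ((0:ℝ) ≤ 1) := ⟨zero_le_one⟩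

/-- A fuzzy relation between `A` and `B` is a map `A × B → [0,1]`. -/
abbrev FRel (A B : Type) : Type := A → B → I

/-- Clamp a real number into the unit interval. -/
def clamp (x : ℝ) : I := Set.projIcc 0 1 zero_le_one x

/-- Composition of fuzzy relations: `(R;S)(a,c) = inf_b min(R(a,b) + S(b,c), 1)`. -/
def fcomp {A B C : Type} (R : FRel A B) (S : FRel B C) : FRel A C :=
  fun a c => ⨅ b : B, clamp ((R a b : ℝ) + (S b c : ℝ))

/-- Converse of a fuzzy relation. -/
def fconv {A B : Type} (R : FRel A B) : FRel B A := fun b a => R a b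

open scoped Classical in
/-- The `ε`-graph of a function. -/
def fgraphE {A B : Type} (ε : I) (f : A → B) : FRel A B :=
  fun a b => if f a = b then ε else 1

/-- The graph of a function. -/
def fgraph {A B : Type} (f : A → B) : FRel A B := fgraphE 0 f

/-- The `ε`-diagonal. -/
def fdiagE (ε : I) (A : Type) : FRel A A := fgraphE ε (id : A → A)

/-- The diagonal. -/
def fdiag (A : Type) : FRel A A := fgraph (id : A → A)

/-- A Set-functor. -/
structure SetFunctor where
  obj : Type → Type
  map : {A B : Type} → (A → B) → obj A → obj B
  map_id : ∀ (A : Type), map (id : A → A) = id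
  map_comp : ∀ {A B C : Type} (f : A → B) (g : B → C), map (g ∘ f) = map g ∘ map f

/-- A fuzzy lax extension of a Set-functor. -/
structure LaxExt (T : SetFunctor) where
  lift : {A B : Type} → FRel A B → FRel (T.obj A) (T.obj B)
  mono : ∀ {A B : Type} (R S : FRel A B), R ≤ S → lift R ≤ lift S
  lax_comp : ∀ {A B C : Type} (R : FRel A B) (S : FRel B C),
    lift (fcomp R S) ≤ fcomp (lift R) (lift S)
  lax_graph : ∀ {A B : Type} (f : A → B), lift (fgraph f) ≤ fgraph (T.map f)
  lax_graph_conv : ∀ {A B : Type} (f : A → B),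
    lift (fconv (fgraph f)) ≤ fconv (fgraph (T.map f))

end

/-- A pair `(f,g)` is `R`-nonexpansive if `f(a) − g(b) ≤ R(a,b)` for all `a, b`. -/
def RNonexp {A B : Type} (R : FRel A B) (f : A → I) (g : B → I) : Prop :=
  ∀ a b, (f a : ℝ) - (g b : ℝ) ≤ (R a b : ℝ)

/-- The nonexpansive companion `R[f](b) = sup_a max(f(a) − R(a,b), 0)`. -/
noncomputable def companion {A B : Type} (R : FRel A B) (f : A → I) : B → I :=
  fun b => ⨆ a : A, clamp ((f a : ℝ) - (R a b : ℝ))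

/-- The fuzzy elementhood relation `∈_X : X ×> (X → [0,1])`, `∈_X(x,f) = f(x)`. -/
def felem (X : Type) : FRel X (X → I) := fun x f => f x

/-- The Moss lifting `μ^sig_X(f₁,…,fₙ)(t) = L(∈_X)(t, sig_{QX}(f₁,…,fₙ))`. -/
noncomputable def mossLift (T : SetFunctor) (L : LaxExt T) {n : ℕ}
    (sig : (X : Type) → (Fin n → X) → T.obj X)
    (X : Type) (f : Fin n → (X → I)) (t : T.obj X) : I :=
  L.lift (felem X) t (sig (X → I) f)

lemma coe_clamp (z : ℝ) : (clamp z : ℝ) = max 0 (min 1 z) := rfl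

lemma clamp_coe (x : I) : clamp (x : ℝ) = x := by
  rw [clamp, Set.projIcc_of_mem zero_le_one x.2]

lemma clamp_mono {z w : ℝ} (h : z ≤ w) : clamp z ≤ clamp w :=
  Set.monotone_projIcc zero_le_one h

lemma le_clamp {x : I} {z : ℝ} (h : (x : ℝ) ≤ z) : x ≤ clamp z := by
  rw [← Subtype.coe_le_coe, coe_clamp]
  exact le_max_of_le_right (le_min x.2.2 h)

lemma clamp_le {z : ℝ} {x : I} (h : z ≤ (x : ℝ)) : clamp z ≤ x := by
  rw [← Subtype.coe_le_coe, coe_clamp]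
  exact max_le x.2.1 (le_trans (min_le_right _ _) h)

lemma coe_clamp_le {z : ℝ} (h : 0 ≤ z) : (clamp z : ℝ) ≤ z := by
  rw [coe_clamp]; exact max_le h (min_le_right _ _)

lemma le_coe_clamp {z : ℝ} (h : z ≤ 1) : z ≤ (clamp z : ℝ) := by
  rw [coe_clamp]; exact le_max_of_le_right (le_min h le_rfl)

/-- the Moss lifting of a natural transformation `sig : (−)^n ⇒ T` preserves
nonexpansivity: it maps `R`-nonexpansive tuples of pairs to `LR`-nonexpansive pairs. -/
theorem moss_lifting_preserves_nonexpansivity (T : SetFunctor) (L : LaxExt T) (n : ℕ)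
    (sig : (X : Type) → (Fin n → X) → T.obj X)
    (hsig : ∀ (X Y : Type) (f : X → Y) (v : Fin n → X),
      T.map f (sig X v) = sig Y (fun i => f (v i)))
    (A B : Type) (R : FRel A B)
    (f : Fin n → (A → I)) (g : Fin n → (B → I))
    (hfg : ∀ i, RNonexp R (f i) (g i)) :
    RNonexp (L.lift R) (mossLift T L sig A f) (mossLift T L sig B g) := by
  intro t₁ t₂
  set u : T.obj (A → I) := sig (A → I) f with hu
  set v : T.obj (B → I) := sig (B → I) g with hv
  set s : T.obj (Fin n) := sig (Fin n) id with hs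
  have hfu : T.map f s = u := hsig _ _ f id
  have hgv : T.map g s = v := hsig _ _ g id
  set X₁ : FRel B (Fin n) := fcomp (felem B) (fconv (fgraph g)) with hX₁
  set Q : FRel B (A → I) := fcomp X₁ (fgraph f) with hQdef
  -- Step 1: felem A ≤ fcomp R Q
  have step1 : felem A ≤ fcomp R Q := by
    intro a
    intro h
    apply le_iInf; intro b
    apply le_clamp
    have hQ : clamp ((h a : ℝ) - (R a b : ℝ)) ≤ Q b h := by
      apply le_iInf; intro i
      by_cases hih : f i = h
      · have hX : clamp ((h a : ℝ) - (R a b : ℝ)) ≤ X₁ b i := by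
          apply le_iInf; intro k
          by_cases hk : g i = k
          · refine clamp_mono ?_
            have h0 : (fconv (fgraph g) k i : ℝ) = 0 := by
              simp [fconv, fgraph, fgraphE, hk]
            rw [h0, add_zero]
            have := hfg i a b
            subst hih; subst hk
            simp only [felem]
            linarith
          · refine clamp_mono ?_
            have h1 : (fconv (fgraph g) k i : ℝ) = 1 := by
              simp [fconv, fgraph, fgraphE, hk]
            rw [h1]
            have h2 := (h a).2.2
            have h3 := (R a b).2.1
            have h4 := (k b).2.1
            simp only [felem]
            linarith
        refine hX.trans (le_clamp ?_)
        have h0 : (fgraph f i h : ℝ) = 0 := by simp [fgraph, fgraphE, hih]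
        rw [h0, add_zero]
      · refine clamp_mono ?_
        have h1 : (fgraph f i h : ℝ) = 1 := by simp [fgraph, fgraphE, hih]
        rw [h1]
        have h2 := (h a).2.2
        have h3 := (R a b).2.1
        have h4 := (X₁ b i).2.1
        linarith
    have h2 := Subtype.coe_le_coe.mpr hQ
    have hz : (h a : ℝ) - (R a b : ℝ) ≤ 1 := by
      have := (h a).2.2; have := (R a b).2.1; linarith
    have h3 := (le_coe_clamp hz).trans h2
    simp only [felem]
    linarith
  -- Step 3: L.lift Q t₂ u ≤ L.lift (felem B) t₂ v
  have hGf : (L.lift (fgraph f) s u : ℝ) ≤ 0 := by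
    have h1 := Subtype.coe_le_coe.mpr (L.lax_graph f s u)
    have h0 : (fgraph (T.map f) s u : ℝ) = 0 := by simp [fgraph, fgraphE, hfu]
    linarith
  have hGg : (L.lift (fconv (fgraph g)) v s : ℝ) ≤ 0 := by
    have h1 := Subtype.coe_le_coe.mpr (L.lax_graph_conv g v s)
    have h0 : (fconv (fgraph (T.map g)) v s : ℝ) = 0 := by
      simp [fconv, fgraph, fgraphE, hgv]
    linarith
  have hX : (L.lift X₁ t₂ s : ℝ) ≤ (L.lift (felem B) t₂ v : ℝ) := by
    have h2 : L.lift X₁ t₂ s ≤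
        clamp ((L.lift (felem B) t₂ v : ℝ) + (L.lift (fconv (fgraph g)) v s : ℝ)) :=
      le_trans (L.lax_comp (felem B) (fconv (fgraph g)) t₂ s) (iInf_le _ v)
    have h3 := Subtype.coe_le_coe.mpr h2
    have hnn : (0:ℝ) ≤ (L.lift (felem B) t₂ v : ℝ) + (L.lift (fconv (fgraph g)) v s : ℝ) :=
      add_nonneg (L.lift (felem B) t₂ v).2.1 (L.lift (fconv (fgraph g)) v s).2.1
    have h4 := coe_clamp_le hnn
    linarith
  have hQu : (L.lift Q t₂ u : ℝ) ≤ (L.lift (felem B) t₂ v : ℝ) := by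
    have h1 : L.lift Q t₂ u ≤
        clamp ((L.lift X₁ t₂ s : ℝ) + (L.lift (fgraph f) s u : ℝ)) :=
      le_trans (L.lax_comp X₁ (fgraph f) t₂ u) (iInf_le _ s)
    have h2 := Subtype.coe_le_coe.mpr h1
    have hnn : (0:ℝ) ≤ (L.lift X₁ t₂ s : ℝ) + (L.lift (fgraph f) s u : ℝ) :=
      add_nonneg (L.lift X₁ t₂ s).2.1 (L.lift (fgraph f) s u).2.1
    have h3 := coe_clamp_le hnn
    linarith
  -- Main chain
  have hM : L.lift (felem A) t₁ u ≤ clamp ((L.lift R t₁ t₂ : ℝ) + (L.lift Q t₂ u : ℝ)) := by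
    calc L.lift (felem A) t₁ u ≤ L.lift (fcomp R Q) t₁ u := L.mono _ _ step1 t₁ u
      _ ≤ fcomp (L.lift R) (L.lift Q) t₁ u := L.lax_comp R Q t₁ u
      _ ≤ _ := iInf_le _ t₂
  have h5 := Subtype.coe_le_coe.mpr hM
  have hnn : (0:ℝ) ≤ (L.lift R t₁ t₂ : ℝ) + (L.lift Q t₂ u : ℝ) :=
    add_nonneg (L.lift R t₁ t₂).2.1 (L.lift Q t₂ u).2.1
  have h6 := coe_clamp_le hnn
  have hA : (mossLift T L sig A f t₁ : ℝ) = (L.lift (felem A) t₁ u : ℝ) := rfl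
  have hB : (mossLift T L sig B g t₂ : ℝ) = (L.lift (felem B) t₂ v : ℝ) := rfl
  rw [hA, hB]
  linarith
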